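/- Suppose for each N and each alternative Θ_q we have Stein-type bounds (1/N) ln β_N^ε(Θ_q) ≥ −D(Θ_p‖Θ_q) − δ_{εN}(Θ_q) + (1/N) ln(1−α_N) with α_N ≤ ε, and suppose sup over Θ_q ∈ U_N of δ_{εN}(Θ_q) → 0 as N → ∞, where U_N = {Θ_q : −D(Θ_p‖Θ_q) + (1/N) ln(1−ε) ≥ (1/N) ln β*} for fixed 0 < β* < 1. Then lim_{N→∞} inf_{Θ_q ∈ U_N} [β_N^ε(Θ_q)]^{1/N} = 1, whereas for any fixed Θ_q ≠ Θ_p with D(Θ_p‖Θ_q) > 0, lim_{N→∞}[β_N^ε(Θ_q)]^{1/N} = exp(−D(Θ_p‖Θ_q)) < 1. -/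

import Mathlib

/-!
Write `β^{1/N} = exp ((1/N) log β)`. On `U_N` the Stein lower bound together with the defining
inequality of `U_N` gives `(1/N) log β ≥ (1/N) log β* − δ`, and both terms vanish uniformly on
`U_N`, so the infimum of `β^{1/N}` over `U_N` is squeezed between `1 − η` and `1`. For a fixed
alternative the two Stein bounds squeeze `(1/N) log β` to `−D`.
-/

open Filter Real Topology

lemma tendsto_sInf_of_forall_le {ι : Type*} {l : Filter ι} {s : ι → Set ℝ} {c : ℝ}
    (hne : ∀ i, (s i).Nonempty) (hle : ∀ i, ∀ x ∈ s i, x ≤ c)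
    (hlow : ∀ η > 0, ∀ᶠ i in l, ∀ x ∈ s i, c - η ≤ x) :
    Tendsto (fun i => sInf (s i)) l (𝓝 c) := by
  rw [Metric.tendsto_nhds]
  intro ε hε
  filter_upwards [hlow (ε / 2) (half_pos hε)] with i hi
  obtain ⟨x, hx⟩ := hne i
  have hinf_le : sInf (s i) ≤ c := csInf_le_of_le ⟨c - ε / 2, hi⟩ hx (hle i x hx)
  have le_hinf : c - ε / 2 ≤ sInf (s i) := le_csInf ⟨x, hx⟩ hi
  rw [Real.dist_eq, abs_sub_lt_iff]
  constructor <;> linarith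

lemma rpow_inv_natCast_eq_exp {b : ℝ} (hb : 0 < b) (N : ℕ) :
    b ^ (N : ℝ)⁻¹ = exp ((N : ℝ)⁻¹ * log b) := by
  rw [rpow_def_of_pos hb, mul_comm]

lemma tendsto_sInf_rpow_inv_natCast {Θ : Type*} {β : ℕ → Θ → ℝ} {U : ℕ → Set Θ}
    (hβpos : ∀ N θ, 0 < β N θ) (hβle : ∀ N θ, β N θ ≤ 1) (hne : ∀ N, (U N).Nonempty)
    (hlow : ∀ η > 0, ∀ᶠ N in atTop, ∀ θ ∈ U N, -η ≤ (N : ℝ)⁻¹ * log (β N θ)) :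
    Tendsto (fun N : ℕ => sInf ((fun θ => β N θ ^ (N : ℝ)⁻¹) '' U N)) atTop (𝓝 1) := by
  refine tendsto_sInf_of_forall_le (fun N => (hne N).image _) ?_ fun η hη => ?_
  · rintro N _ ⟨θ, -, rfl⟩
    exact rpow_le_one (hβpos N θ).le (hβle N θ) (by positivity)
  · filter_upwards [hlow η hη] with N hN
    rintro _ ⟨θ, hθ, rfl⟩
    dsimp only
    rw [rpow_inv_natCast_eq_exp (hβpos N θ)]
    calc 1 - η ≤ exp (-η) := by linarith [add_one_le_exp (-η)]
      _ ≤ _ := exp_le_exp.2 (hN θ hθ)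

lemma tendsto_rpow_inv_natCast {b : ℕ → ℝ} {L : ℝ} (hb : ∀ N, 0 < b N)
    (h : Tendsto (fun N : ℕ => (N : ℝ)⁻¹ * log (b N)) atTop (𝓝 L)) :
    Tendsto (fun N : ℕ => b N ^ (N : ℝ)⁻¹) atTop (𝓝 (exp L)) := by
  simp only [rpow_inv_natCast_eq_exp (hb _)]
  exact (continuous_exp.tendsto L).comp h

lemma tendsto_inv_mul_log_one_sub {α : ℕ → ℝ} {ε : ℝ} (hε1 : ε < 1)
    (hα0 : ∀ N, 0 ≤ α N) (hα : ∀ N, α N ≤ ε) :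
    Tendsto (fun N : ℕ => (N : ℝ)⁻¹ * log (1 - α N)) atTop (𝓝 0) := by
  have hlim : Tendsto (fun N : ℕ => (N : ℝ)⁻¹ * log (1 - ε)) atTop (𝓝 0) := by
    simpa using tendsto_inv_atTop_nhds_zero_nat.mul_const (log (1 - ε))
  refine tendsto_of_tendsto_of_tendsto_of_le_of_le hlim tendsto_const_nhds (fun N => ?_) fun N => ?_
  · exact mul_le_mul_of_nonneg_left (log_le_log (by linarith) (by linarith [hα N]))
      (by positivity)
  · exact mul_nonpos_of_nonneg_of_nonpos (by positivity)
      (log_nonpos (by linarith [hα N]) (by linarith [hα0 N]))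

lemma sub_le_inv_mul_log_of_stein_lower {N : ℕ} {D δ a ε βstar b : ℝ} (hε1 : ε < 1)
    (ha : a ≤ ε) (hmem : (N : ℝ)⁻¹ * log βstar ≤ -D + (N : ℝ)⁻¹ * log (1 - ε))
    (hlower : -D - δ + (N : ℝ)⁻¹ * log (1 - a) ≤ (N : ℝ)⁻¹ * log b) :
    (N : ℝ)⁻¹ * log βstar - δ ≤ (N : ℝ)⁻¹ * log b := by
  have : (N : ℝ)⁻¹ * log (1 - ε) ≤ (N : ℝ)⁻¹ * log (1 - a) :=
    mul_le_mul_of_nonneg_left (log_le_log (by linarith) (by linarith)) (by positivity)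
  linarith

theorem stmt4_general {Θ : Type*} (Dkl : Θ → ℝ)
    (β : ℕ → Θ → ℝ) (δ : ℕ → Θ → ℝ) (α : ℕ → ℝ)
    (ε βstar : ℝ) (hε1 : ε < 1)
    (hβpos : ∀ N θq, 0 < β N θq) (hβle : ∀ N θq, β N θq ≤ 1)
    (hα0 : ∀ N, 0 ≤ α N) (hα : ∀ N, α N ≤ ε)
    (hlower : ∀ N : ℕ, 0 < N → ∀ θq,
      -Dkl θq - δ N θq + (N : ℝ)⁻¹ * Real.log (1 - α N) ≤
        (N : ℝ)⁻¹ * Real.log (β N θq))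
    (hupper : ∀ N : ℕ, 0 < N → ∀ θq,
      (N : ℝ)⁻¹ * Real.log (β N θq) ≤
        -Dkl θq + δ N θq + (N : ℝ)⁻¹ * Real.log (1 - α N))
    (U : ℕ → Set Θ)
    (hU : ∀ N : ℕ, U N =
      {θq | (N : ℝ)⁻¹ * Real.log βstar ≤ -Dkl θq + (N : ℝ)⁻¹ * Real.log (1 - ε)})
    (hUne : ∀ N, (U N).Nonempty)
    (hδsup : ∀ η > (0 : ℝ), ∀ᶠ N : ℕ in atTop, ∀ θq ∈ U N, δ N θq < η)
    (hδfix : ∀ θq, Tendsto (fun N : ℕ => δ N θq) atTop (𝓝 0)) :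
    Tendsto (fun N : ℕ => sInf ((fun θq => β N θq ^ ((N : ℝ)⁻¹)) '' U N)) atTop (𝓝 1) ∧
    ∀ θq, 0 < Dkl θq →
      Tendsto (fun N : ℕ => β N θq ^ ((N : ℝ)⁻¹)) atTop (𝓝 (Real.exp (-Dkl θq))) ∧
      Real.exp (-Dkl θq) < 1 := by
  refine ⟨tendsto_sInf_rpow_inv_natCast hβpos hβle hUne fun η hη => ?_,
    fun θq hD => ⟨?_, exp_lt_one_iff.2 (neg_lt_zero.2 hD)⟩⟩
  · have hβstar : Tendsto (fun N : ℕ => (N : ℝ)⁻¹ * log βstar) atTop (𝓝 0) := by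
      simpa using tendsto_inv_atTop_nhds_zero_nat.mul_const (log βstar)
    filter_upwards [hβstar.eventually (lt_mem_nhds (neg_lt_zero.2 (half_pos hη))),
      hδsup (η / 2) (half_pos hη), eventually_gt_atTop 0] with N hβN hδN hN θq hθ
    have hmem := hU N ▸ hθ
    linarith [hδN θq hθ, sub_le_inv_mul_log_of_stein_lower hε1 (hα N) hmem (hlower N hN θq)]
  · have hlogα := tendsto_inv_mul_log_one_sub hε1 hα0 hα
    refine tendsto_rpow_inv_natCast (hβpos · θq) (tendsto_of_tendsto_of_tendsto_of_le_of_le'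
      ?_ ?_ ((eventually_gt_atTop 0).mono fun N hN => hlower N hN θq)
      ((eventually_gt_atTop 0).mono fun N hN => hupper N hN θq))
    · simpa using (tendsto_const_nhds.sub (hδfix θq)).add hlogα
    · simpa using (tendsto_const_nhds.add (hδfix θq)).add hlogα

/-- Stein-type asymptotics: on the sets `U_N` of nearly indistinguishable
alternatives, `inf (β_N^ε)^{1/N} → 1`, while for any fixed alternative at
positive relative-entropy distance, `(β_N^ε)^{1/N} → exp(−D) < 1`. -/
theorem stmt4 {Θ : Type*} (Dkl : Θ → ℝ) (hDkl : ∀ θq, 0 ≤ Dkl θq)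
    (β : ℕ → Θ → ℝ) (δ : ℕ → Θ → ℝ) (α : ℕ → ℝ)
    (ε βstar : ℝ) (hε : 0 < ε) (hε1 : ε < 1) (hβstar : 0 < βstar) (hβstar1 : βstar < 1)
    (hβpos : ∀ N θq, 0 < β N θq) (hβle : ∀ N θq, β N θq ≤ 1)
    (hα0 : ∀ N, 0 ≤ α N) (hα : ∀ N, α N ≤ ε)
    (hδpos : ∀ N θq, 0 ≤ δ N θq)
    (hlower : ∀ N : ℕ, 0 < N → ∀ θq,
      -Dkl θq - δ N θq + (N : ℝ)⁻¹ * Real.log (1 - α N) ≤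
        (N : ℝ)⁻¹ * Real.log (β N θq))
    (hupper : ∀ N : ℕ, 0 < N → ∀ θq,
      (N : ℝ)⁻¹ * Real.log (β N θq) ≤
        -Dkl θq + δ N θq + (N : ℝ)⁻¹ * Real.log (1 - α N))
    (U : ℕ → Set Θ)
    (hU : ∀ N : ℕ, U N =
      {θq | (N : ℝ)⁻¹ * Real.log βstar ≤ -Dkl θq + (N : ℝ)⁻¹ * Real.log (1 - ε)})
    (hUne : ∀ N, (U N).Nonempty)
    (hδsup : ∀ η > (0 : ℝ), ∀ᶠ N : ℕ in atTop, ∀ θq ∈ U N, δ N θq < η)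
    (hδfix : ∀ θq, Tendsto (fun N : ℕ => δ N θq) atTop (𝓝 0)) :
    Tendsto (fun N : ℕ => sInf ((fun θq => β N θq ^ ((N : ℝ)⁻¹)) '' U N)) atTop (𝓝 1) ∧
    ∀ θq, 0 < Dkl θq →
      Tendsto (fun N : ℕ => β N θq ^ ((N : ℝ)⁻¹)) atTop (𝓝 (Real.exp (-Dkl θq))) ∧
      Real.exp (-Dkl θq) < 1 :=
  stmt4_general Dkl β δ α ε βstar hε1 hβpos hβle hα0 hα hlower hupper U hU hUne hδsup hδfix
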